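/- arXiv:0912.3214 — 2 statements merged into one kernel-verified Lean document; each statement's English description precedes it below -/
import Mathlib

section
/- Define F₀(i) = 1 and F_n(i) = Σ_{k=0}^{⌊n/2⌋} C(⌊n/2⌋, k)·f_i^{⌊n/2⌋−k}·c_i^k·F_k(i+1), where for each level i, f_i, c_i ≥ 0 and f_i + c_i ≤ 1. Then 0 ≤ F_n(i) ≤ 1 for all n ≥ 0 and all i, and F_n(i) is non-increasing in n at fixed i. -/
/-- Failure probability of the recycling protocol: `Frec f c n i` is the
probability of failing to generate a singlet starting from `n` states at
recursion level `i`, where `f i` and `c i` are the complete-failure and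
PMS-retention probabilities of a single pairing at level `i`. -/
def Frec (f c : ℕ → ℝ) : ℕ → ℕ → ℝ
  | 0, _ => 1
  | (n + 1), i =>
      ∑ k ∈ (Finset.range ((n + 1) / 2 + 1)).attach,
        (Nat.choose ((n + 1) / 2) k.1 : ℝ) * f i ^ ((n + 1) / 2 - k.1) * c i ^ k.1 *
          Frec f c k.1 (i + 1)
  termination_by n _ => n
  decreasing_by
    have hk := Finset.mem_range.mp k.2
    omega

/-!
Write `B_m(g) = ∑_{k ≤ m} C(m,k) f^(m-k) c^k g(k)`. Then `F_n(i) = B_{⌊n/2⌋}(F_·(i+1))` with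
`f = f_i`, `c = c_i`, also for `n = 0` since `F_0 = 1`. As `⌊n/2⌋ < n` for `n > 0`, strong
induction on `n` gives `0 ≤ F_n(i) ≤ (f_i + c_i)^⌊n/2⌋ ≤ 1`. Pascal's rule gives
`B_{m+1}(g) = f B_m(g) + c B_m(g ∘ succ) ≤ (f + c) B_m(g) ≤ B_m(g)` for `g` nonnegative and
antitone, and since `⌊(n+1)/2⌋` is `⌊n/2⌋` or `⌊n/2⌋ + 1`, a second strong induction on `n`
yields `F_{n+1}(i) ≤ F_n(i)`.
-/

open Finset

section binomSum

variable {R : Type*} [CommSemiring R]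

def binomSum (x y : R) (g : ℕ → R) (m : ℕ) : R :=
  ∑ k ∈ range (m + 1), (m.choose k : R) * x ^ (m - k) * y ^ k * g k

lemma binomSum_one (x y : R) (m : ℕ) : binomSum x y 1 m = (x + y) ^ m := by
  rw [binomSum, add_comm x y, add_pow]
  refine sum_congr rfl fun k _ => ?_
  simp only [Pi.one_apply]
  ring

lemma binomSum_succ (x y : R) (g : ℕ → R) (m : ℕ) :
    binomSum x y g (m + 1) = x * binomSum x y g m + y * binomSum x y (fun k => g (k + 1)) m := by
  have pascal := sum_choose_succ_mul (R := R) (fun i j => x ^ j * y ^ i * g i) m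
  simp only [← mul_assoc] at pascal
  rw [binomSum, pascal, binomSum, binomSum, mul_sum, mul_sum]
  congr 1
  · refine sum_congr rfl fun k hk => ?_
    rw [Nat.sub_add_comm (Nat.lt_succ_iff.mp (mem_range.mp hk))]
    ring
  · refine sum_congr rfl fun k _ => ?_
    ring

variable [PartialOrder R] [IsOrderedRing R] {x y : R} {g h : ℕ → R} {m : ℕ}

lemma binomSum_weight_nonneg (hx : 0 ≤ x) (hy : 0 ≤ y) (k : ℕ) :
    0 ≤ (m.choose k : R) * x ^ (m - k) * y ^ k := by
  positivity

lemma binomSum_nonneg (hx : 0 ≤ x) (hy : 0 ≤ y) (hg : ∀ k ≤ m, 0 ≤ g k) :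
    0 ≤ binomSum x y g m :=
  sum_nonneg fun k hk =>
    mul_nonneg (binomSum_weight_nonneg hx hy k) (hg k (Nat.lt_succ_iff.mp (mem_range.mp hk)))

lemma binomSum_le_binomSum (hx : 0 ≤ x) (hy : 0 ≤ y) (hgh : ∀ k ≤ m, g k ≤ h k) :
    binomSum x y g m ≤ binomSum x y h m :=
  sum_le_sum fun k hk => mul_le_mul_of_nonneg_left
    (hgh k (Nat.lt_succ_iff.mp (mem_range.mp hk))) (binomSum_weight_nonneg hx hy k)

lemma binomSum_le_one (hx : 0 ≤ x) (hy : 0 ≤ y) (hxy : x + y ≤ 1) (hg : ∀ k ≤ m, g k ≤ 1) :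
    binomSum x y g m ≤ 1 :=
  calc binomSum x y g m ≤ binomSum x y 1 m := binomSum_le_binomSum hx hy hg
    _ = (x + y) ^ m := binomSum_one x y m
    _ ≤ 1 := pow_le_one₀ (add_nonneg hx hy) hxy

lemma binomSum_succ_le (hx : 0 ≤ x) (hy : 0 ≤ y) (hxy : x + y ≤ 1)
    (hg : ∀ k ≤ m, 0 ≤ g k) (hg_anti : ∀ k ≤ m, g (k + 1) ≤ g k) :
    binomSum x y g (m + 1) ≤ binomSum x y g m := by
  have hshift : binomSum x y (fun k => g (k + 1)) m ≤ binomSum x y g m :=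
    binomSum_le_binomSum hx hy hg_anti
  have hnonneg : 0 ≤ binomSum x y g m := binomSum_nonneg hx hy hg
  calc binomSum x y g (m + 1)
      ≤ x * binomSum x y g m + y * binomSum x y g m := by
        rw [binomSum_succ]; gcongr
    _ = (x + y) * binomSum x y g m := (add_mul x y _).symm
    _ ≤ binomSum x y g m := mul_le_of_le_one_left hnonneg hxy

end binomSum

section Frec

lemma Frec_zero (f c : ℕ → ℝ) (i : ℕ) : Frec f c 0 i = 1 := by
  rw [Frec]

lemma Frec_eq_binomSum (f c : ℕ → ℝ) (n i : ℕ) :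
    Frec f c n i = binomSum (f i) (c i) (Frec f c · (i + 1)) (n / 2) := by
  rcases n with _ | n
  · simp [Frec_zero, binomSum]
  · rw [Frec, binomSum]
    exact sum_attach _ fun k =>
      (((n + 1) / 2).choose k : ℝ) * f i ^ ((n + 1) / 2 - k) * c i ^ k * Frec f c k (i + 1)

variable {f c : ℕ → ℝ} (hf : ∀ i, 0 ≤ f i) (hc : ∀ i, 0 ≤ c i) (hfc : ∀ i, f i + c i ≤ 1)
include hf hc hfc

lemma Frec_mem_Icc (n i : ℕ) : Frec f c n i ∈ Set.Icc 0 1 := by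
  induction n using Nat.strong_induction_on generalizing i with
  | _ n ih =>
  rcases Nat.eq_zero_or_pos n with rfl | hn
  · simp [Frec_zero]
  have hnext : ∀ k ≤ n / 2, Frec f c k (i + 1) ∈ Set.Icc 0 1 :=
    fun k hk => ih k (by omega) (i + 1)
  rw [Frec_eq_binomSum]
  exact ⟨binomSum_nonneg (hf i) (hc i) fun k hk => (hnext k hk).1,
    binomSum_le_one (hf i) (hc i) (hfc i) fun k hk => (hnext k hk).2⟩

lemma Frec_succ_le (n i : ℕ) : Frec f c (n + 1) i ≤ Frec f c n i := by
  induction n using Nat.strong_induction_on generalizing i with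
  | _ n ih =>
  rcases n with _ | n
  · rw [Frec_zero]
    exact (Frec_mem_Icc hf hc hfc 1 i).2
  rw [Frec_eq_binomSum, Frec_eq_binomSum f c (n + 1)]
  obtain h | h : (n + 2) / 2 = (n + 1) / 2 ∨ (n + 2) / 2 = (n + 1) / 2 + 1 := by omega
  · rw [h]
  · rw [h]
    exact binomSum_succ_le (hf i) (hc i) (hfc i)
      (fun k _ => (Frec_mem_Icc hf hc hfc k (i + 1)).1) fun k hk => ih k (by omega) (i + 1)

lemma Frec_antitone (i : ℕ) : Antitone (Frec f c · i) :=
  antitone_nat_of_succ_le fun n => Frec_succ_le hf hc hfc n i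

end Frec

theorem recycling_failure_bounds (f c : ℕ → ℝ)
    (hf : ∀ i, 0 ≤ f i) (hc : ∀ i, 0 ≤ c i) (hfc : ∀ i, f i + c i ≤ 1) :
    (∀ n i, 0 ≤ Frec f c n i ∧ Frec f c n i ≤ 1) ∧
    (∀ m n i, m ≤ n → Frec f c n i ≤ Frec f c m i) :=
  ⟨Frec_mem_Icc hf hc hfc, fun _ _ i hmn => Frec_antitone hf hc hfc i hmn⟩
end

section
/- For α, β ∈ [1/2, 1], the pure-state hybrid swapping probability min(1, 2(1−αβ)) is greater than or equal to both the CEP probability (min(1, 2(1−αβ)))² and the direct-swapping probability 1 − (1 − 2(1−α))(1 − 2(1−β)). -/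
theorem pure_hybrid_optimal (α β : ℝ)
    (hα : α ∈ Set.Icc (1/2 : ℝ) 1) (hβ : β ∈ Set.Icc (1/2 : ℝ) 1) :
    (min 1 (2 * (1 - α * β))) ^ 2 ≤ min 1 (2 * (1 - α * β)) ∧
    1 - (1 - 2 * (1 - α)) * (1 - 2 * (1 - β)) ≤ min 1 (2 * (1 - α * β)) := by
  obtain ⟨ha1, ha2⟩ := hα
  obtain ⟨hb1, hb2⟩ := hβ
  have h0 : 0 ≤ 2 * (1 - α * β) := by nlinarith
  have hm0 : 0 ≤ min 1 (2 * (1 - α * β)) := le_min one_pos.le h0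
  have hm1 : min 1 (2 * (1 - α * β)) ≤ 1 := min_le_left _ _
  constructor
  · nlinarith [hm0, hm1]
  · apply le_min
    · nlinarith
    · nlinarith
end
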